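/- arXiv:1806.03085 — 2 statements merged into one kernel-verified Lean document; each statement's English description precedes it below -/
import Mathlib

section
/- Let d ≥ 1, let p : ℝ^d → ℝ be a continuous probability density with compact support, and let π : ℝ^d → ℝ be a strictly positive density with log π of class C¹. Let V : ℝ^d → ℝ^d be a C¹ map. Then the function τ ↦ −∫ p(x) ( log π(x + τ V(x)) + log |det( I + τ DV(x) )| ) dx has derivative at τ = 0 equal to −∫ p(x) [ ⟪∇(log π)(x), V(x)⟫ + div V(x) ] dx, where div V(x) = trace(DV(x)) is the divergence of V. (This is the first variation of the KL objective at the zero map, whose negative is the Stein variational gradient descent direction.) -/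
open MeasureTheory Matrix
open scoped ENNReal

/-- The Jacobian matrix of a map `V : ℝ^d → ℝ^d` at `x`. -/
noncomputable def jacobian {d : ℕ} (V : (Fin d → ℝ) → (Fin d → ℝ)) (x : Fin d → ℝ) :
    Matrix (Fin d) (Fin d) ℝ :=
  Matrix.of fun i j => fderiv ℝ V x (Pi.single j 1) i

/-- The gradient of `f : ℝ^d → ℝ` at `x`. -/
noncomputable def grad {d : ℕ} (f : (Fin d → ℝ) → ℝ) (x : Fin d → ℝ) : Fin d → ℝ :=
  fun i => fderiv ℝ f x (Pi.single i 1)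

noncomputable def detD {d : ℕ} (A : Matrix (Fin d) (Fin d) ℝ) (τ : ℝ) : ℝ :=
  ∑ σ : Equiv.Perm (Fin d), ((Equiv.Perm.sign σ : ℤ) : ℝ) *
    ∑ i : Fin d, (∏ j ∈ Finset.univ.erase i,
        ((1 : Matrix (Fin d) (Fin d) ℝ) (σ j) j + τ * A (σ j) j)) • (A (σ i) i)

lemma det_eq_sum {d : ℕ} (A : Matrix (Fin d) (Fin d) ℝ) (s : ℝ) :
    ((1 : Matrix (Fin d) (Fin d) ℝ) + s • A).det =
      ∑ σ : Equiv.Perm (Fin d), ((Equiv.Perm.sign σ : ℤ) : ℝ) *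
        ∏ i : Fin d, ((1 : Matrix (Fin d) (Fin d) ℝ) (σ i) i + s * A (σ i) i) := by
  simp [Matrix.det_apply', Matrix.add_apply, Matrix.smul_apply, smul_eq_mul]

lemma hasDerivAt_detp {d : ℕ} (A : Matrix (Fin d) (Fin d) ℝ) (τ : ℝ) :
    HasDerivAt (fun s => ((1 : Matrix (Fin d) (Fin d) ℝ) + s • A).det) (detD A τ) τ := by
  have h : (fun s => ((1 : Matrix (Fin d) (Fin d) ℝ) + s • A).det) =
      fun s => ∑ σ : Equiv.Perm (Fin d), ((Equiv.Perm.sign σ : ℤ) : ℝ) *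
        ∏ i : Fin d, ((1 : Matrix (Fin d) (Fin d) ℝ) (σ i) i + s * A (σ i) i) :=
    funext fun s => det_eq_sum A s
  rw [h, detD]
  apply HasDerivAt.fun_sum
  intro σ _
  apply HasDerivAt.const_mul
  refine HasDerivAt.fun_finsetProd fun i _ => ?_
  simpa using (hasDerivAt_const τ ((1 : Matrix (Fin d) (Fin d) ℝ) (σ i) i)).fun_add
    (hasDerivAt_mul_const (A (σ i) i))

lemma detD_zero {d : ℕ} (A : Matrix (Fin d) (Fin d) ℝ) : detD A 0 = A.trace := by
  have h1 := hasDerivAt_detp A 0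
  have h2 : HasDerivAt (fun s : ℝ => ((1 : Matrix (Fin d) (Fin d) ℝ) + s • A).det) A.trace (0:ℝ) := by
    have hr : HasDerivAt (fun s : ℝ => 1 + A.trace * s +
          ((Matrix.det (1 + (Polynomial.X : Polynomial ℝ) • A.map Polynomial.C)).divX.divX.eval s)
            * s ^ 2) A.trace 0 := by
      set Q := (Matrix.det (1 + (Polynomial.X : Polynomial ℝ) • A.map Polynomial.C)).divX.divX
      have := (((hasDerivAt_const (0:ℝ) (1:ℝ)).fun_add
        ((hasDerivAt_id (0:ℝ)).const_mul A.trace)).fun_add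
        ((Polynomial.hasDerivAt Q (0:ℝ)).fun_mul (hasDerivAt_pow 2 (0:ℝ))))
      exact this.congr_deriv (by norm_num)
    exact hr.congr_of_eventuallyEq
      (Filter.Eventually.of_forall fun s => Matrix.det_one_add_smul s A)
  exact h1.unique h2

lemma continuous_detD_comp {d : ℕ} {X : Type*} [TopologicalSpace X] {f : X → ℝ}
    {g : X → Matrix (Fin d) (Fin d) ℝ} (hf : Continuous f) (hg : Continuous g) :
    Continuous fun x => detD (g x) (f x) := by
  unfold detD
  apply continuous_finset_sum
  intro σ _
  apply Continuous.mul continuous_const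
  apply continuous_finset_sum
  intro i _
  apply Continuous.fun_smul
  · apply continuous_finset_prod
    intro j _
    exact continuous_const.add (hf.mul
      ((continuous_apply j).comp ((continuous_apply (σ j)).comp hg)))
  · exact (continuous_apply i).comp ((continuous_apply (σ i)).comp hg)

lemma fderiv_apply_eq_grad_dot {d : ℕ} (f : (Fin d → ℝ) → ℝ) (x v : Fin d → ℝ) :
    fderiv ℝ f x v = grad f x ⬝ᵥ v := by
  have hv : v = ∑ i : Fin d, v i • (Pi.single i 1 : Fin d → ℝ) := by
    funext j
    rw [Finset.sum_apply]
    simp [Pi.single_apply, Finset.sum_ite_eq']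
  calc fderiv ℝ f x v = fderiv ℝ f x (∑ i : Fin d, v i • (Pi.single i 1 : Fin d → ℝ)) := by rw [← hv]
    _ = ∑ i : Fin d, v i • fderiv ℝ f x ((Pi.single i 1 : Fin d → ℝ)) := by
        rw [map_sum]; exact Finset.sum_congr rfl fun i _ => by rw [_root_.map_smul]
    _ = grad f x ⬝ᵥ v := by
        simp only [smul_eq_mul, dotProduct, grad]
        exact Finset.sum_congr rfl fun i _ => mul_comm _ _

set_option maxHeartbeats 2000000 in
/-- First variation of the KL objective at the zero map: the derivative at `τ = 0` of
`τ ↦ −∫ p(x)(log π(x + τ V x) + log |det(I + τ DV(x))|) dx` equals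
`−∫ p(x) [⟪∇ log π(x), V x⟫ + div V(x)] dx`, where `div V(x) = trace DV(x)`. -/
theorem hasDerivAt_first_variation_at_zero {d : ℕ} (hd : 1 ≤ d)
    (p : (Fin d → ℝ) → ℝ) (hp_cont : Continuous p) (hp_nonneg : ∀ x, 0 ≤ p x)
    (hp_supp : HasCompactSupport p) (hp_int : ∫ x, p x = 1)
    (π : (Fin d → ℝ) → ℝ) (hπ_pos : ∀ x, 0 < π x) (hπ_int : ∫ x, π x = 1)
    (hπ_smooth : ContDiff ℝ 1 fun x => Real.log (π x))
    (V : (Fin d → ℝ) → (Fin d → ℝ)) (hV : ContDiff ℝ 1 V) :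
    HasDerivAt
      (fun τ : ℝ =>
        -∫ x, p x * (Real.log (π (x + τ • V x)) +
          Real.log |((1 : Matrix (Fin d) (Fin d) ℝ) + τ • jacobian V x).det|))
      (-∫ x, p x *
        ((grad (fun z => Real.log (π z)) x) ⬝ᵥ V x + (jacobian V x).trace))
      0 := by
  classical
  set L : (Fin d → ℝ) → ℝ := fun z => Real.log (π z) with hLdef
  have hL : ContDiff ℝ 1 L := hπ_smooth
  set J : (Fin d → ℝ) → Matrix (Fin d) (Fin d) ℝ := jacobian V with hJdef
  have hVc : Continuous V := hV.continuous
  have hJcont : Continuous J := by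
    rw [hJdef]
    apply continuous_matrix
    intro i j
    exact (continuous_apply i).comp
      ((ContinuousLinearMap.apply ℝ (Fin d → ℝ) ((Pi.single j 1 : Fin d → ℝ))).continuous.comp
        (hV.continuous_fderiv one_ne_zero))
  set φ : ℝ × (Fin d → ℝ) → ℝ :=
    fun q => ((1 : Matrix (Fin d) (Fin d) ℝ) + q.1 • J q.2).det with hφdef
  have hφc : Continuous φ :=
    Continuous.matrix_det (continuous_const.add (continuous_fst.smul (hJcont.comp continuous_snd)))
  set K := tsupport p with hKdef
  have hK : IsCompact K := hp_supp
  -- tube lemma to find ε with φ > 1/2 on closedBall 0 (ε/2) ×ˢ K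
  have hUopen : IsOpen {q : ℝ × (Fin d → ℝ) | (1:ℝ)/2 < φ q} := isOpen_lt continuous_const hφc
  have hsub : ({0} : Set ℝ) ×ˢ K ⊆ {q : ℝ × (Fin d → ℝ) | (1:ℝ)/2 < φ q} := by
    rintro ⟨τ, x⟩ ⟨hτ, hx⟩
    simp only [Set.mem_singleton_iff] at hτ
    subst hτ
    have : φ (0, x) = 1 := by simp [hφdef]
    simp only [Set.mem_setOf_eq, this]
    norm_num
  obtain ⟨v, w, hvo, hwo, hv0, hKw, hvw⟩ :=
    generalized_tube_lemma isCompact_singleton hK hUopen hsub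
  obtain ⟨ε, hε, hball⟩ := Metric.isOpen_iff.1 hvo 0 (hv0 rfl)
  have hφpos : ∀ τ x, τ ∈ Metric.closedBall (0:ℝ) (ε/2) → x ∈ K → (1:ℝ)/2 < φ (τ, x) := by
    intro τ x hτ hx
    exact hvw ⟨hball (Metric.closedBall_subset_ball (by linarith) hτ), hKw hx⟩
  -- the pointwise derivative
  set Ψ : ℝ × (Fin d → ℝ) → ℝ :=
    fun q => fderiv ℝ L (q.2 + q.1 • V q.2) (V q.2) + detD (J q.2) q.1 / φ q with hΨdef
  have c1 : Continuous fun q : ℝ × (Fin d → ℝ) => fderiv ℝ L (q.2 + q.1 • V q.2) (V q.2) := by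
    have h1 : Continuous fun q : ℝ × (Fin d → ℝ) =>
        (fderiv ℝ L (q.2 + q.1 • V q.2), V q.2) :=
      ((hL.continuous_fderiv one_ne_zero).comp
        (continuous_snd.add (continuous_fst.smul (hVc.comp continuous_snd)))).prodMk
        (hVc.comp continuous_snd)
    exact isBoundedBilinearMap_apply.continuous.comp h1
  have c2 : Continuous fun q : ℝ × (Fin d → ℝ) => detD (J q.2) q.1 :=
    continuous_detD_comp continuous_fst (hJcont.comp continuous_snd)
  set S := Metric.closedBall (0:ℝ) (ε/2) ×ˢ K with hSdef
  have hScomp : IsCompact S := (isCompact_closedBall _ _).prod hK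
  have hΨS : ContinuousOn Ψ S := by
    refine c1.continuousOn.add (c2.continuousOn.div hφc.continuousOn ?_)
    rintro ⟨τ, x⟩ ⟨hτ, hx⟩
    exact ne_of_gt ((by norm_num : (0:ℝ) < 1/2).trans (hφpos τ x hτ hx))
  obtain ⟨M, hM⟩ := hScomp.exists_bound_of_continuousOn hΨS
  set M' := max M 0 with hM'def
  have hpint : Integrable p := hp_cont.integrable_of_hasCompactSupport hp_supp
  have hbint : Integrable (fun x => p x * M') := hpint.mul_const M'
  -- hypotheses of the dominated-derivative lemma
  have hFmeas : ∀ᶠ τ in nhds (0:ℝ), AEStronglyMeasurable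
      (fun x => p x * (L (x + τ • V x) + Real.log |φ (τ, x)|)) volume := by
    refine Filter.Eventually.of_forall fun τ => ?_
    have m1 : Continuous fun x => L (x + τ • V x) :=
      hL.continuous.comp (continuous_id.add (continuous_const.fun_smul hVc))
    have m2 : Measurable fun x => Real.log |φ (τ, x)| :=
      Real.measurable_log.comp ((hφc.comp (Continuous.prodMk_right τ)).abs.measurable)
    exact (hp_cont.measurable.mul (m1.measurable.add m2)).aestronglyMeasurable
  have hFint : Integrable (fun x => p x * (L (x + (0:ℝ) • V x) + Real.log |φ ((0:ℝ), x)|)) := by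
    have he : (fun x => p x * (L (x + (0:ℝ) • V x) + Real.log |φ ((0:ℝ), x)|)) =
        fun x => p x * L x := by
      funext x; simp [hφdef]
    rw [he]
    exact (hp_cont.mul hL.continuous).integrable_of_hasCompactSupport hp_supp.mul_right
  have hF'meas : AEStronglyMeasurable (fun x => p x * Ψ ((0:ℝ), x)) volume := by
    have cnum : Continuous fun x => detD (J x) (0:ℝ) :=
      continuous_detD_comp continuous_const hJcont
    have cden : Continuous fun x => φ ((0:ℝ), x) := hφc.comp (Continuous.prodMk_right 0)
    have hc : Continuous fun x => Ψ ((0:ℝ), x) :=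
      (c1.comp (Continuous.prodMk_right 0)).add
        (cnum.div cden fun x => by simp [hφdef])
    exact (hp_cont.mul hc).aestronglyMeasurable
  have hbound : ∀ᵐ x ∂(volume : Measure (Fin d → ℝ)), ∀ τ ∈ Metric.ball (0:ℝ) (ε/2),
      ‖p x * Ψ (τ, x)‖ ≤ p x * M' := by
    refine Filter.Eventually.of_forall fun x τ hτ => ?_
    by_cases hpx : p x = 0
    · simp [hpx]
    · have hxK : x ∈ K := subset_tsupport p (Function.mem_support.2 hpx)
      have hτ' : τ ∈ Metric.closedBall (0:ℝ) (ε/2) := Metric.ball_subset_closedBall hτ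
      have hb := hM (τ, x) ⟨hτ', hxK⟩
      rw [norm_mul]
      calc ‖p x‖ * ‖Ψ (τ, x)‖ ≤ ‖p x‖ * M' :=
            mul_le_mul_of_nonneg_left (hb.trans (le_max_left _ _)) (norm_nonneg _)
        _ = p x * M' := by rw [Real.norm_eq_abs, abs_of_nonneg (hp_nonneg x)]
  have hdiff : ∀ᵐ x ∂(volume : Measure (Fin d → ℝ)), ∀ τ ∈ Metric.ball (0:ℝ) (ε/2),
      HasDerivAt (fun s => p x * (L (x + s • V x) + Real.log |φ (s, x)|)) (p x * Ψ (τ, x)) τ := by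
    refine Filter.Eventually.of_forall fun x τ hτ => ?_
    by_cases hpx : p x = 0
    · simp only [hpx, zero_mul]
      exact hasDerivAt_const _ _
    · have hxK : x ∈ K := subset_tsupport p (Function.mem_support.2 hpx)
      have hφx : φ (τ, x) ≠ 0 :=
        ne_of_gt ((by norm_num : (0:ℝ) < 1/2).trans
          (hφpos τ x (Metric.ball_subset_closedBall hτ) hxK))
      have hu : HasDerivAt (fun s : ℝ => x + s • V x) (V x) τ := by
        simpa using ((hasDerivAt_id τ).smul_const (V x)).const_add x
      have h1 : HasDerivAt (fun s : ℝ => L (x + s • V x))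
          (fderiv ℝ L (x + τ • V x) (V x)) τ :=
        by have h := ((hL.differentiable one_ne_zero (x + τ • V x)).hasFDerivAt).comp_hasDerivAt τ hu; exact h
      have h2 : HasDerivAt (fun s : ℝ => φ (s, x)) (detD (J x) τ) τ := hasDerivAt_detp (J x) τ
      have h3 := h2.log hφx
      have habs : (fun s : ℝ => L (x + s • V x) + Real.log |φ (s, x)|) =
          fun s : ℝ => L (x + s • V x) + Real.log (φ (s, x)) :=
        funext fun s => by rw [Real.log_abs]
      have h4 : HasDerivAt (fun s : ℝ => L (x + s • V x) + Real.log |φ (s, x)|) (Ψ (τ, x)) τ := by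
        rw [habs]
        exact h1.add h3
      exact h4.const_mul (p x)
  have key := hasDerivAt_integral_of_dominated_loc_of_deriv_le (μ := volume)
    (F := fun τ x => p x * (L (x + τ • V x) + Real.log |φ (τ, x)|))
    (F' := fun τ x => p x * Ψ (τ, x)) (bound := fun x => p x * M')
    (Metric.ball_mem_nhds 0 (half_pos hε)) hFmeas hFint hF'meas hbound hbint hdiff
  have kd := key.2.neg
  have hval : (∫ x, p x * Ψ ((0:ℝ), x)) =
      ∫ x, p x * ((grad L x) ⬝ᵥ V x + (J x).trace) := by
    refine integral_congr_ae (Filter.Eventually.of_forall fun x => ?_)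
    have h0 : φ ((0:ℝ), x) = 1 := by simp [hφdef]
    have hΨ0 : Ψ ((0:ℝ), x) = (grad L x) ⬝ᵥ V x + (J x).trace := by
      show fderiv ℝ L (x + (0:ℝ) • V x) (V x) + detD (J x) 0 / φ ((0:ℝ), x) = _
      rw [h0, detD_zero, div_one, zero_smul, add_zero, fderiv_apply_eq_grad_dot]
    show p x * Ψ ((0:ℝ), x) = p x * ((grad L x) ⬝ᵥ V x + (J x).trace)
    rw [hΨ0]
  rw [hval] at kd
  exact kd
end

section
/- Let d ≥ 1, let p : ℝ^d → ℝ be a continuous probability density with compact support, and let π : ℝ^d → ℝ be a strictly positive density with log π of class C². Let V, W : ℝ^d → ℝ^d be C¹ maps. For S : ℝ^d → ℝ^d with det(I + DS(x)) ≠ 0 on the support of p, define the first variation DJ[S](V) := −∫ p(x) [ ⟪∇(log π)(x + S(x)), V(x)⟫ + trace( (I + DS(x))⁻¹ · DV(x) ) ] dx. Then the function τ ↦ DJ[τW](V) has derivative at τ = 0 equal to −∫ p(x) [ ⟪W(x), (∇²(log π)(x)) · V(x)⟫ − trace( DW(x) · DV(x) ) ] dx, where ∇²(log π)(x) is the Hessian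 matrix of log π at x. (This is the second variation of the KL objective at the zero map, D²J_p[0](V,W).) -/
open MeasureTheory Matrix
open scoped ENNReal

/-- The Hessian matrix of `f : ℝ^d → ℝ` at `x`, with `(i, j)` entry `∂_i ∂_j f (x)`. -/
noncomputable def hess {d : ℕ} (f : (Fin d → ℝ) → ℝ) (x : Fin d → ℝ) :
    Matrix (Fin d) (Fin d) ℝ :=
  Matrix.of fun i j => fderiv ℝ (fun y => fderiv ℝ f y (Pi.single j 1)) x (Pi.single i 1)

theorem aux_inv_deriv {d : ℕ} (M N : Matrix (Fin d) (Fin d) ℝ) (τ : ℝ)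
    (hdet : ((1 : Matrix (Fin d) (Fin d) ℝ) + τ • M).det ≠ 0) :
    HasDerivAt (fun t : ℝ => (((1 : Matrix (Fin d) (Fin d) ℝ) + t • M)⁻¹ * N).trace)
      (-((((1 : Matrix (Fin d) (Fin d) ℝ) + τ • M)⁻¹ * M *
          ((1 : Matrix (Fin d) (Fin d) ℝ) + τ • M)⁻¹ * N).trace)) τ := by
  letI : NormedRing (Matrix (Fin d) (Fin d) ℝ) := Matrix.linftyOpNormedRing
  letI : NormedAlgebra ℝ (Matrix (Fin d) (Fin d) ℝ) := Matrix.linftyOpNormedAlgebra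
  letI : CompleteSpace (Matrix (Fin d) (Fin d) ℝ) := FiniteDimensional.complete ℝ _
  have hu : IsUnit ((1 : Matrix (Fin d) (Fin d) ℝ) + τ • M) :=
    (Matrix.isUnit_iff_isUnit_det _).2 (isUnit_iff_ne_zero.2 hdet)
  have hA : HasDerivAt (fun t : ℝ => (1 : Matrix (Fin d) (Fin d) ℝ) + t • M) M τ := by
    have h := ((hasDerivAt_id τ).smul_const M).const_add (1 : Matrix (Fin d) (Fin d) ℝ)
    rw [one_smul] at h
    exact h
  have hinv := hasFDerivAt_ringInverse (𝕜 := ℝ) hu.unit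
  rw [hu.unit_spec] at hinv
  have h2 := hinv.comp_hasDerivAt τ hA
  have h2' : HasDerivAt (fun t : ℝ => Ring.inverse ((1 : Matrix (Fin d) (Fin d) ℝ) + t • M))
      (-(((1 : Matrix (Fin d) (Fin d) ℝ) + τ • M)⁻¹ * M *
          ((1 : Matrix (Fin d) (Fin d) ℝ) + τ • M)⁻¹)) τ := by
    simp [Function.comp, ContinuousLinearMap.mulLeftRight_apply, Matrix.coe_units_inv,
      hu.unit_spec, mul_assoc] at h2
    rw [mul_assoc]
    exact h2
  have h3 := h2'.mul_const N
  have h4 := (LinearMap.toContinuousLinearMap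
      (Matrix.traceLinearMap (Fin d) ℝ ℝ)).hasFDerivAt.comp_hasDerivAt τ h3
  simp only [Function.comp_def, LinearMap.coe_toContinuousLinearMap', Matrix.traceLinearMap_apply,
    Matrix.nonsing_inv_eq_ringInverse] at h4 ⊢
  refine h4.congr_deriv ?_
  change Matrix.trace (-(Ring.inverse (1 + τ • M) * M * Ring.inverse (1 + τ • M)) * N) = _
  rw [neg_mul, Matrix.trace_neg]
theorem aux_grad_deriv {d : ℕ} (L : (Fin d → ℝ) → ℝ) (hL : ContDiff ℝ 2 L)
    (V W : (Fin d → ℝ) → (Fin d → ℝ)) (x : Fin d → ℝ) (τ : ℝ) :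
    HasDerivAt (fun t : ℝ => (grad L (x + t • W x)) ⬝ᵥ V x)
      ((W x) ⬝ᵥ (hess L (x + τ • W x) *ᵥ V x)) τ := by
  have hc : HasDerivAt (fun t : ℝ => x + t • W x) (W x) τ := by
    simpa using ((hasDerivAt_id τ).smul_const (W x)).const_add x
  set y := x + τ • W x with hy
  have key : ∀ j, HasDerivAt (fun t : ℝ => fderiv ℝ L (x + t • W x) (Pi.single j 1))
      (fderiv ℝ (fun z => fderiv ℝ L z (Pi.single j 1)) y (W x)) τ := by
    intro j
    have hgj : ContDiff ℝ 1 (fun z => fderiv ℝ L z (Pi.single j 1)) :=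
      (hL.fderiv_right (by norm_num : (1 : WithTop ℕ∞) + 1 ≤ 2)).clm_apply contDiff_const
    exact ((hgj.differentiable one_ne_zero y).hasFDerivAt).comp_hasDerivAt τ hc
  have h1 := HasDerivAt.fun_sum
    (fun j (_ : j ∈ (Finset.univ : Finset (Fin d))) => (key j).mul_const (V x j))
  have hWx : W x = ∑ i : Fin d, W x i • (Pi.single i 1 : Fin d → ℝ) := by
    funext k; simp [Finset.sum_apply, Pi.single_apply]
  have hval : ∑ j, fderiv ℝ (fun z => fderiv ℝ L z (Pi.single j 1)) y (W x) * V x j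
      = (W x) ⬝ᵥ (hess L y *ᵥ V x) := by
    have step : ∀ j, fderiv ℝ (fun z => fderiv ℝ L z (Pi.single j 1)) y (W x)
        = ∑ i, W x i * hess L y i j := by
      intro j
      conv_lhs => rw [hWx]
      rw [map_sum]
      simp [hess, smul_eq_mul]
    simp only [step, dotProduct, Matrix.mulVec, Finset.sum_mul, Finset.mul_sum]
    rw [Finset.sum_comm]
    exact Finset.sum_congr rfl fun i _ => Finset.sum_congr rfl fun j _ => by ring
  simpa [grad, dotProduct, hval] using h1

/-- Second variation of the KL objective at the zero map: the derivative at `τ = 0` of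
`τ ↦ DJ[τW](V) = −∫ p(x)[⟪∇ log π(x + τ W x), V x⟫ + trace((I + τ DW(x))⁻¹ DV(x))] dx`
equals `−∫ p(x)[⟪W x, ∇² log π(x) · V x⟫ − trace(DW(x) DV(x))] dx`. -/
theorem hasDerivAt_second_variation {d : ℕ} (hd : 1 ≤ d)
    (p : (Fin d → ℝ) → ℝ) (hp_cont : Continuous p) (hp_nonneg : ∀ x, 0 ≤ p x)
    (hp_supp : HasCompactSupport p) (hp_int : ∫ x, p x = 1)
    (π : (Fin d → ℝ) → ℝ) (hπ_pos : ∀ x, 0 < π x) (hπ_int : ∫ x, π x = 1)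
    (hπ_smooth : ContDiff ℝ 2 fun x => Real.log (π x))
    (V W : (Fin d → ℝ) → (Fin d → ℝ)) (hV : ContDiff ℝ 1 V) (hW : ContDiff ℝ 1 W) :
    HasDerivAt
      (fun τ : ℝ =>
        -∫ x, p x *
          ((grad (fun z => Real.log (π z)) (x + τ • W x)) ⬝ᵥ V x +
            (((1 : Matrix (Fin d) (Fin d) ℝ) + τ • jacobian W x)⁻¹ * jacobian V x).trace))
      (-∫ x, p x *
        ((W x) ⬝ᵥ (hess (fun z => Real.log (π z)) x *ᵥ V x) -
          (jacobian W x * jacobian V x).trace))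
      0 := by
  classical
  set L : (Fin d → ℝ) → ℝ := fun z => Real.log (π z) with hLdef
  set F : ℝ → (Fin d → ℝ) → ℝ := fun τ x => p x *
      ((grad L (x + τ • W x)) ⬝ᵥ V x +
        (((1 : Matrix (Fin d) (Fin d) ℝ) + τ • jacobian W x)⁻¹ * jacobian V x).trace) with hF
  set F' : ℝ → (Fin d → ℝ) → ℝ := fun τ x => p x *
      ((W x) ⬝ᵥ (hess L (x + τ • W x) *ᵥ V x) -
        ((((1 : Matrix (Fin d) (Fin d) ℝ) + τ • jacobian W x)⁻¹ * jacobian W x *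
          ((1 : Matrix (Fin d) (Fin d) ℝ) + τ • jacobian W x)⁻¹ * jacobian V x).trace)) with hF'
  -- basic continuity facts
  have cfder : ∀ {g : (Fin d → ℝ) → ℝ}, ContDiff ℝ 1 g → ∀ v,
      Continuous fun y => fderiv ℝ g y v := fun hg v =>
    (hg.continuous_fderiv one_ne_zero).clm_apply continuous_const
  have hL2 : ContDiff ℝ 2 L := hπ_smooth
  have cgrad : Continuous fun y => grad L y :=
    continuous_pi fun j => cfder (hL2.of_le (by norm_num)) _
  have chess : Continuous fun y => hess L y := by
    apply continuous_matrix
    intro i j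
    have hgj : ContDiff ℝ 1 (fun z => fderiv ℝ L z (Pi.single j 1)) :=
      (hL2.fderiv_right (by norm_num : (1 : WithTop ℕ∞) + 1 ≤ 2)).clm_apply contDiff_const
    exact cfder hgj _
  have cJW : Continuous fun x => jacobian W x := by
    apply continuous_matrix
    intro i j
    exact (continuous_apply i).comp ((hW.continuous_fderiv one_ne_zero).clm_apply continuous_const)
  have cJV : Continuous fun x => jacobian V x := by
    apply continuous_matrix
    intro i j
    exact (continuous_apply i).comp ((hV.continuous_fderiv one_ne_zero).clm_apply continuous_const)
  -- the compact support and the tube lemma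
  set K := tsupport p with hKdef
  have hK : IsCompact K := hp_supp
  set q : ℝ × (Fin d → ℝ) → Matrix (Fin d) (Fin d) ℝ :=
    fun z => (1 : Matrix (Fin d) (Fin d) ℝ) + z.1 • jacobian W z.2 with hq
  have cq : Continuous q :=
    continuous_const.add (continuous_fst.smul (cJW.comp continuous_snd))
  have cdet : Continuous fun z => (q z).det := cq.matrix_det
  set D : Set (ℝ × (Fin d → ℝ)) := (fun z => (q z).det) ⁻¹' {0}ᶜ with hD
  have hDopen : IsOpen D := cdet.isOpen_preimage _ isClosed_singleton.isOpen_compl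
  have hsub : ({(0 : ℝ)} : Set ℝ) ×ˢ K ⊆ D := by
    rintro ⟨t, x⟩ ⟨ht, hx⟩
    have ht' : t = 0 := ht
    simp [hD, hq, ht']
  obtain ⟨u, v, hu, hv, h0u, hKv, huv⟩ :=
    generalized_tube_lemma isCompact_singleton hK hDopen hsub
  obtain ⟨ε, hε, hball⟩ := Metric.mem_nhds_iff.1 (hu.mem_nhds (h0u rfl))
  have hSdet : ∀ τ (x : Fin d → ℝ), τ ∈ Metric.closedBall (0:ℝ) (ε/2) → x ∈ K →
      ((1 : Matrix (Fin d) (Fin d) ℝ) + τ • jacobian W x).det ≠ 0 := by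
    intro τ x hτ hx
    have : (τ, x) ∈ D :=
      huv (Set.mk_mem_prod (hball (Metric.closedBall_subset_ball (half_lt_self hε) hτ)) (hKv hx))
    simpa [hD, hq] using this
  -- the bound
  set G : ℝ × (Fin d → ℝ) → ℝ := fun z =>
      (W z.2) ⬝ᵥ (hess L (z.2 + z.1 • W z.2) *ᵥ V z.2) -
        (((q z)⁻¹ * jacobian W z.2 * (q z)⁻¹) * jacobian V z.2).trace with hG
  set S : Set (ℝ × (Fin d → ℝ)) := Metric.closedBall (0:ℝ) (ε/2) ×ˢ K with hS
  have hScompact : IsCompact S := (isCompact_closedBall _ _).prod hK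
  have hSsub : ∀ z ∈ S, (q z).det ≠ 0 := fun z hz => hSdet z.1 z.2 hz.1 hz.2
  have cinv : ContinuousOn (fun z => (q z)⁻¹) S := by
    have h1 : ContinuousOn (fun z => ((q z).det)⁻¹ • adjugate (q z)) S :=
      ContinuousOn.smul (cdet.continuousOn.inv₀ hSsub) cq.matrix_adjugate.continuousOn
    exact h1.congr fun z hz => by rw [Matrix.inv_def, Ring.inverse_eq_inv']
  have hGcont : ContinuousOn G S := by
    have c1 : Continuous fun z : ℝ × (Fin d → ℝ) =>
        (W z.2) ⬝ᵥ (hess L (z.2 + z.1 • W z.2) *ᵥ V z.2) :=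
      (hW.continuous.comp continuous_snd).dotProduct
        (((chess.comp (continuous_snd.add
            (continuous_fst.smul (hW.continuous.comp continuous_snd))))).matrix_mulVec
          (hV.continuous.comp continuous_snd))
    have c2 : ContinuousOn (fun z => (((q z)⁻¹ * jacobian W z.2 * (q z)⁻¹) *
        jacobian V z.2).trace) S := by
      have := ((cinv.mul (cJW.comp continuous_snd).continuousOn).mul cinv).mul
        (cJV.comp continuous_snd).continuousOn
      exact (continuous_id.matrix_trace).comp_continuousOn this
    exact c1.continuousOn.sub c2
  obtain ⟨C, hC⟩ := hScompact.exists_bound_of_continuousOn hGcont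
  -- measurability of F τ
  have meas_inv : ∀ (τ : ℝ) (i j : Fin d),
      Measurable fun x => ((1 : Matrix (Fin d) (Fin d) ℝ) + τ • jacobian W x)⁻¹ i j := by
    intro τ i j
    have cq1 : Continuous fun x => (1 : Matrix (Fin d) (Fin d) ℝ) + τ • jacobian W x :=
      continuous_const.add (cJW.const_smul τ)
    have heq : (fun x => ((1 : Matrix (Fin d) (Fin d) ℝ) + τ • jacobian W x)⁻¹ i j)
        = fun x => (((1 : Matrix (Fin d) (Fin d) ℝ) + τ • jacobian W x).det)⁻¹ *
            adjugate ((1 : Matrix (Fin d) (Fin d) ℝ) + τ • jacobian W x) i j := by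
      funext x
      rw [Matrix.inv_def, Ring.inverse_eq_inv']
      simp [Matrix.smul_apply, smul_eq_mul]
    rw [heq]
    exact (cq1.matrix_det.measurable.inv).mul ((cq1.matrix_adjugate.matrix_elem i j).measurable)
  have hFmeas : ∀ τ : ℝ, AEStronglyMeasurable (F τ) volume := by
    intro τ
    have m1 : Continuous fun x => grad L (x + τ • W x) ⬝ᵥ V x :=
      (cgrad.comp (continuous_id.add (hW.continuous.const_smul τ))).dotProduct
        hV.continuous
    have m2 : Measurable fun x =>
        (((1 : Matrix (Fin d) (Fin d) ℝ) + τ • jacobian W x)⁻¹ * jacobian V x).trace := by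
      simp only [Matrix.trace, Matrix.diag, Matrix.mul_apply]
      refine Finset.measurable_sum _ fun i _ => Finset.measurable_sum _ fun k _ => ?_
      exact (meas_inv τ i k).mul (cJV.matrix_elem k i).measurable
    exact ((hp_cont.measurable.mul (m1.measurable.add m2)).aestronglyMeasurable)
  -- F' 0 and F 0 simplify
  have hF'0 : F' 0 = fun x => p x *
      ((W x) ⬝ᵥ (hess L x *ᵥ V x) - (jacobian W x * jacobian V x).trace) := by
    funext x
    simp [hF', inv_one]
  have hF'meas : AEStronglyMeasurable (F' 0) volume := by
    rw [hF'0]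
    exact (hp_cont.mul ((hW.continuous.dotProduct
      (chess.matrix_mulVec hV.continuous)).sub
      (cJW.matrix_mul cJV).matrix_trace)).aestronglyMeasurable
  have hF0 : F 0 = fun x => p x * (grad L x ⬝ᵥ V x + (jacobian V x).trace) := by
    funext x
    simp [hF, inv_one]
  have hFint : Integrable (F 0) volume := by
    rw [hF0]
    have hcont : Continuous fun x => p x * (grad L x ⬝ᵥ V x + (jacobian V x).trace) :=
      hp_cont.mul ((cgrad.dotProduct hV.continuous).add cJV.matrix_trace)
    have hsupp : HasCompactSupport fun x => p x * (grad L x ⬝ᵥ V x + (jacobian V x).trace) :=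
      hp_supp.mul_right
    exact hcont.integrable_of_hasCompactSupport hsupp
  -- bound
  set bound : (Fin d → ℝ) → ℝ := fun x => max C 0 * p x with hbound
  have bound_int : Integrable bound volume :=
    (hp_cont.integrable_of_hasCompactSupport hp_supp).const_mul _
  have h_bound : ∀ᵐ x, ∀ τ ∈ Metric.ball (0:ℝ) (ε/2), ‖F' τ x‖ ≤ bound x := by
    refine Filter.Eventually.of_forall fun x τ hτ => ?_
    by_cases hx : x ∈ K
    · have hz : (τ, x) ∈ S := ⟨Metric.ball_subset_closedBall hτ, hx⟩
      have h1 : ‖F' τ x‖ = p x * ‖G (τ, x)‖ := by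
        rw [hF', hG]
        simp only [norm_mul, Real.norm_of_nonneg (hp_nonneg x)]
        rfl
      show ‖F' τ x‖ ≤ (C ⊔ 0) * p x
      rw [h1]
      calc p x * ‖G (τ, x)‖ ≤ p x * (C ⊔ 0) :=
            mul_le_mul_of_nonneg_left ((hC _ hz).trans (le_max_left _ _)) (hp_nonneg x)
        _ = (C ⊔ 0) * p x := mul_comm _ _
    · have hpx : p x = 0 := image_eq_zero_of_notMem_tsupport hx
      simp [hF', hbound, hpx]
  -- pointwise differentiability
  have h_diff : ∀ᵐ x, ∀ τ ∈ Metric.ball (0:ℝ) (ε/2), HasDerivAt (F · x) (F' τ x) τ := by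
    refine Filter.Eventually.of_forall fun x τ hτ => ?_
    by_cases hx : x ∈ K
    · have hdet : ((1 : Matrix (Fin d) (Fin d) ℝ) + τ • jacobian W x).det ≠ 0 :=
        hSdet τ x (Metric.ball_subset_closedBall hτ) hx
      have h1 := aux_grad_deriv L hL2 V W x τ
      have h2 := aux_inv_deriv (jacobian W x) (jacobian V x) τ hdet
      have h3 := (h1.add h2).const_mul (p x)
      simpa [hF, hF', sub_eq_add_neg] using h3
    · have hpx : p x = 0 := image_eq_zero_of_notMem_tsupport hx
      have hzero : (F · x) = fun _ : ℝ => (0:ℝ) := funext fun t => by simp [hF, hpx]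
      have hzero' : F' τ x = 0 := by simp [hF', hpx]
      rw [hzero, hzero']
      exact hasDerivAt_const τ 0
  have main := (hasDerivAt_integral_of_dominated_loc_of_deriv_le (Metric.ball_mem_nhds 0 (half_pos hε))
    (Filter.Eventually.of_forall hFmeas) hFint hF'meas h_bound bound_int h_diff).2
  rw [hF'0] at main
  exact main.neg
end
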